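/- Let M be a 2-entangled matroid with a tangle T of order 2 in K(M). Then every set in T consists of loops and coloops of M; consequently M has exactly one connected component with two or more elements. -/

import Mathlib

open Set

variable {α : Type*} {V : Type*}

/-- An (unbundled) connectivity-system candidate: a ground set together with a
connectivity function on its subsets. -/
structure PreSys (α : Type*) where
  E : Set α
  lam : Set α → ℕ

/-- `K` is a connectivity system: the ground set is finite and the connectivity
function is symmetric and submodular on subsets of the ground set. -/
def PreSys.IsConnSys (K : PreSys α) : Prop :=
  K.E.Finite ∧
  (∀ X ⊆ K.E, K.lam X = K.lam (K.E \ X)) ∧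
  (∀ X ⊆ K.E, ∀ Y ⊆ K.E, K.lam (X ∩ Y) + K.lam (X ∪ Y) ≤ K.lam X + K.lam Y)

/-- A tangle of order `k` in a connectivity system. -/
def IsTangle (K : PreSys α) (k : ℕ) (T : Set (Set α)) : Prop :=
  (∀ A ∈ T, A ⊆ K.E ∧ K.lam A < k) ∧
  (∀ A ⊆ K.E, K.lam A < k → (A ∈ T ↔ (K.E \ A) ∉ T)) ∧
  (∀ A ∈ T, ∀ B ∈ T, ∀ C ∈ T, A ∪ B ∪ C ≠ K.E) ∧
  (∀ A ∈ T, A.ncard ≠ K.E.ncard - 1)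

/-- `K` dominates `K₀`. -/
def Dominates (K K₀ : PreSys α) : Prop :=
  K₀.E ⊆ K.E ∧ ∀ X ⊆ K₀.E, K₀.lam X ≤ K.lam X

/-- The collection of subsets of `K.E` of `K`-connectivity `< k` whose trace on
`K₀.E` lies in `T₀`; when `K` dominates `K₀` and `T₀` is a tangle, this is the
tangle induced by `T₀` in `K`. -/
def InducedTangle (K K₀ : PreSys α) (k : ℕ) (T₀ : Set (Set α)) : Set (Set α) :=
  {X | X ⊆ K.E ∧ K.lam X < k ∧ X ∩ K₀.E ∈ T₀}

/-- `K₀` adheres to `K`. -/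
def Adheres (K₀ K : PreSys α) : Prop :=
  Dominates K K₀ ∧
  ∀ A B : Set α, A ∪ B = K₀.E → Disjoint A B →
    ∃ X₁ X₂ : Set α, Disjoint X₁ X₂ ∧ (X₁ ∪ X₂ = A ∨ X₁ ∪ X₂ = B) ∧
      K.lam X₁ ≤ K₀.lam A ∧ K.lam X₂ ≤ K₀.lam A

/-- The tangle `T` of order `k` in `K` splits in `K₀`: two distinct tangles of
order `k` in `K₀` both induce `T`. -/
def Splits (K K₀ : PreSys α) (k : ℕ) (T : Set (Set α)) : Prop :=
  ∃ T₁ T₂ : Set (Set α), T₁ ≠ T₂ ∧ IsTangle K₀ k T₁ ∧ IsTangle K₀ k T₂ ∧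
    InducedTangle K K₀ k T₁ = T ∧ InducedTangle K K₀ k T₂ = T

/-- `K` is `k`-entangled: for each `t ≤ k` there is at most one tangle of order `t`. -/
def Entangled (K : PreSys α) (k : ℕ) : Prop :=
  ∀ t ≤ k, ∀ T₁ T₂ : Set (Set α), IsTangle K t T₁ → IsTangle K t T₂ → T₁ = T₂

/-! ### Matroids -/

/-- The rank of a set in a matroid: the largest cardinality of an independent
subset of `X`. -/
noncomputable def mrank (M : Matroid α) (X : Set α) : ℕ :=
  sSup {n | ∃ I, M.Indep I ∧ I ⊆ X ∧ I.ncard = n}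

/-- The connectivity function `λ_M(X) = r(X) + r(E \ X) - r(M) + 1` of a matroid. -/
noncomputable def lamM (M : Matroid α) (X : Set α) : ℕ :=
  mrank M X + mrank M (M.E \ X) - mrank M M.E + 1

/-- The connectivity function of the deletion `M \ e`, expressed via the rank
function of `M` (for `X ⊆ E(M) \ {e}` one has `r_{M\e}(X) = r_M(X)`). -/
noncomputable def lamDel (M : Matroid α) (e : α) (X : Set α) : ℕ :=
  mrank M X + mrank M ((M.E \ {e}) \ X) - mrank M (M.E \ {e}) + 1

/-- The connectivity function of the contraction `M / e`, expressed via the rank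
function of `M` (for `Y ⊆ E(M) \ {e}` one has `r_{M/e}(Y) = r_M(Y ∪ {e}) - r_M({e})`,
and `r(M/e) = r(M) - r_M({e})`). -/
noncomputable def lamCon (M : Matroid α) (e : α) (X : Set α) : ℕ :=
  mrank M (X ∪ {e}) + mrank M (((M.E \ {e}) \ X) ∪ {e}) - mrank M {e} - mrank M M.E + 1

/-- The connectivity system `K(M)` of a matroid `M`. -/
noncomputable def KM (M : Matroid α) : PreSys α := ⟨M.E, lamM M⟩

/-- The connectivity system `K(M \ e)`. -/
noncomputable def KDel (M : Matroid α) (e : α) : PreSys α := ⟨M.E \ {e}, lamDel M e⟩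

/-- The connectivity system `K(M / e)`. -/
noncomputable def KCon (M : Matroid α) (e : α) : PreSys α := ⟨M.E \ {e}, lamCon M e⟩

/-! ### Graphs, cut-rank and pivoting -/

/-- The cut-rank, relative to a ground set `S` of vertices, of a set `X`:
the GF(2)-rank of the adjacency submatrix with rows `X ∩ S` and columns `S \ X`.
For an induced subgraph of `G` on `S` this is its cut-rank function. -/
noncomputable def cutRankOn (G : SimpleGraph V) [Fintype V] (S X : Set V) : ℕ :=
  letI : Fintype ↥(X ∩ S) := (Set.toFinite _).fintype
  letI : Fintype ↥(S \ X) := (Set.toFinite _).fintype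
  letI : DecidableRel G.Adj := Classical.decRel _
  Matrix.rank (Matrix.of fun (a : ↥(X ∩ S)) (b : ↥(S \ X)) =>
    if G.Adj a.1 b.1 then (1 : ZMod 2) else 0)

/-- The cut-rank function `ρ_G` of a graph `G`. -/
noncomputable def cutRank (G : SimpleGraph V) [Fintype V] (X : Set V) : ℕ :=
  cutRankOn G Set.univ X

/-- Local complementation at a vertex `v`: adjacency among the neighbours of `v`
is complemented. -/
def localComp (G : SimpleGraph V) (v : V) : SimpleGraph V where
  Adj a b := a ≠ b ∧
    ((G.Adj v a ∧ G.Adj v b ∧ ¬ G.Adj a b) ∨ (¬ (G.Adj v a ∧ G.Adj v b) ∧ G.Adj a b))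
  symm := by
    constructor
    intro a b h
    obtain ⟨hab, h⟩ := h
    refine ⟨hab.symm, ?_⟩
    rcases h with ⟨h1, h2, h3⟩ | ⟨h1, h2⟩
    · exact Or.inl ⟨h2, h1, fun h => h3 h.symm⟩
    · exact Or.inr ⟨fun h => h1 ⟨h.2, h.1⟩, h2.symm⟩
  loopless := ⟨fun a h => h.1 rfl⟩

/-- The pivot `G × e` on an edge `e = uv`, defined as `G * u * v * u` where `*`
denotes local complementation. -/
def pivot (G : SimpleGraph V) (u v : V) : SimpleGraph V :=
  localComp (localComp (localComp G u) v) u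

/-- The connectivity system `CR(G) = (V(G), ρ_G)`. -/
noncomputable def CR (G : SimpleGraph V) [Fintype V] : PreSys V :=
  ⟨Set.univ, cutRank G⟩

/-- The connectivity system `CR(G - v)` of the graph obtained by deleting the
vertex `v`: ground set `V \ {v}` with the cut-rank computed inside `V \ {v}`. -/
noncomputable def CRdel (G : SimpleGraph V) [Fintype V] (v : V) : PreSys V :=
  ⟨{v}ᶜ, cutRankOn G {v}ᶜ⟩

/-! ### Partial branch-decompositions -/

/-- A partial branch-decomposition of a connectivity system `K`: a cubic tree
(each vertex of degree 1 or 3) together with a map from the ground set to the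
leaves of the tree. -/
structure PBD (K : PreSys α) (V : Type*) where
  tree : SimpleGraph V
  isTree : tree.IsTree
  cubic : ∀ x : V, (tree.neighborSet x).ncard = 1 ∨ (tree.neighborSet x).ncard = 3
  f : α → V
  maps : ∀ a ∈ K.E, (tree.neighborSet (f a)).ncard = 1

/-- A leaf of the cubic tree of a partial branch-decomposition. -/
def PBD.IsLeaf {K : PreSys α} (D : PBD K V) (x : V) : Prop :=
  (D.tree.neighborSet x).ncard = 1

/-- The side of the edge `uw` of the tree `tr` towards `u`: the elements of the
ground set mapped by `f` into the component of `tr - uw` containing `u`. -/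
def edgeSide (K : PreSys α) (tr : SimpleGraph V) (f : α → V) (u w : V) : Set α :=
  {a | a ∈ K.E ∧ (tr.deleteEdges {s(u, w)}).Reachable (f a) u}

/-- The partial branch-decomposition data `(tr, f)` has width at most `t`:
every edge of the tree induces a partition whose sides have connectivity at most `t`. -/
def widthLE (K : PreSys α) (tr : SimpleGraph V) (f : α → V) (t : ℕ) : Prop :=
  ∀ u w : V, tr.Adj u w → K.lam (edgeSide K tr f u w) ≤ t

/-- The set displayed by the vertex `x`: the elements of the ground set mapped to `x`. -/
def display (K : PreSys α) (f : α → V) (x : V) : Set α :=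
  {a | a ∈ K.E ∧ f a = x}

/-- `X` is weakly `t`-branched: `λ(X) ≤ t` and there is a partial
branch-decomposition of width at most `t` in which every leaf displays a subset
of `E \ X` or a singleton. -/
def WeaklyBranched (K : PreSys α) (X : Set α) (t : ℕ) : Prop :=
  K.lam X ≤ t ∧
    ∃ (V : Type) (_ : Fintype V) (D : PBD K V), widthLE K D.tree D.f t ∧
      ∀ x : V, D.IsLeaf x →
        (display K D.f x ⊆ K.E \ X ∨ ∃ a : α, display K D.f x = {a})

/-- `X` is `t`-branched: there is a partial branch-decomposition of width at most
`t` in which some leaf displays `E \ X` and every other leaf displays at most one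
element of `X`. -/
def Branched (K : PreSys α) (X : Set α) (t : ℕ) : Prop :=
  ∃ (V : Type) (_ : Fintype V) (D : PBD K V), widthLE K D.tree D.f t ∧
    ∃ r : V, D.IsLeaf r ∧ display K D.f r = K.E \ X ∧
      ∀ x : V, D.IsLeaf x → x ≠ r → (display K D.f x ∩ X).ncard ≤ 1

/-- `κ_K(X, Y)`: the minimum connectivity of a set `Z` with `X ⊆ Z ⊆ E \ Y`. -/
noncomputable def kappa (K : PreSys α) (X Y : Set α) : ℕ :=
  sInf {n | ∃ Z : Set α, X ⊆ Z ∧ Z ⊆ K.E \ Y ∧ K.lam Z = n}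

/-- A separator of `M`: a subset of the ground set with `λ_M(X) = 1`. -/
def IsSeparator {α : Type*} (M : Matroid α) (X : Set α) : Prop :=
  X ⊆ M.E ∧ lamM M X = 1

/-- A (connected) component of `M`: a minimal nonempty separator. -/
def IsComponent {α : Type*} (M : Matroid α) (C : Set α) : Prop :=
  IsSeparator M C ∧ C.Nonempty ∧
    ∀ C' ⊆ C, C'.Nonempty → IsSeparator M C' → C' = C

/-!
The sets in a tangle of order `2` of `K(M)` are separators, and by submodularity of `λ_M`
separators are closed under complements, intersections and unions. Hence no separator splits a
component `C`, and when `|C| ≥ 2` the separators disjoint from `C` form a tangle of order `2`;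
by entanglement it is `T`. So the sets of `T` avoid every component with two or more elements,
and their elements form singleton components, that is, they are loops or coloops. Two such
components `C ≠ C'` would be disjoint, putting `C'` into `T`, the tangle avoiding `C'`; and if
there were none, `T` would contain every singleton of `E(M)` and hence their union `E(M)`.
-/

section Tangle

variable {K : PreSys α} {k : ℕ} {T : Set (Set α)} {A B C : Set α} {x : α}

namespace IsTangle

lemma ground_not_mem (hT : IsTangle K k T) : K.E ∉ T := fun h =>
  hT.2.2.1 _ h _ h _ h (by simp only [union_self])

lemma empty_mem (hT : IsTangle K k T) (h : K.lam ∅ < k) : ∅ ∈ T :=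
  (hT.2.1 ∅ (empty_subset _) h).2 (by rw [sdiff_empty]; exact hT.ground_not_mem)

lemma union_mem (hT : IsTangle K k T) (hA : A ∈ T) (hB : B ∈ T) (h : K.lam (A ∪ B) < k) :
    A ∪ B ∈ T := by
  have hAB : A ∪ B ⊆ K.E := union_subset (hT.1 A hA).1 (hT.1 B hB).1
  exact (hT.2.1 _ hAB h).2 fun hc => hT.2.2.1 A hA B hB _ hc (union_sdiff_cancel hAB)

lemma singleton_mem (hT : IsTangle K k T) (hx : x ∈ K.E) (h : K.lam {x} < k) : {x} ∈ T :=
  (hT.2.1 {x} (singleton_subset_iff.2 hx) h).2 fun hc =>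
    hT.2.2.2 _ hc (ncard_sdiff_singleton_of_mem hx)

end IsTangle

def PreSys.avoiding (K : PreSys α) (k : ℕ) (C : Set α) : Set (Set α) :=
  {A | A ⊆ K.E ∧ K.lam A < k ∧ Disjoint A C}

lemma isTangle_avoiding (hfin : K.E.Finite) (hsymm : ∀ A ⊆ K.E, K.lam (K.E \ A) = K.lam A)
    (hCE : C ⊆ K.E) (hC : 2 ≤ C.ncard)
    (hsplit : ∀ A ⊆ K.E, K.lam A < k → C ⊆ A ∨ Disjoint A C) :
    IsTangle K k (K.avoiding k C) := by
  obtain ⟨y, hy⟩ : C.Nonempty := nonempty_of_ncard_ne_zero (by omega)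
  refine ⟨fun A hA => ⟨hA.1, hA.2.1⟩, fun A hAE hA => ⟨?_, fun hc => ?_⟩, ?_, ?_⟩
  · rintro ⟨-, -, hAC⟩ ⟨-, -, hcC⟩
    exact disjoint_left.1 hcC ⟨hCE hy, disjoint_right.1 hAC hy⟩ hy
  · refine ⟨hAE, hA, (hsplit A hAE hA).resolve_left fun hCA => hc ?_⟩
    exact ⟨sdiff_subset, (hsymm A hAE).symm ▸ hA, disjoint_sdiff_left.mono_right hCA⟩
  · rintro A ⟨-, -, hAC⟩ B ⟨-, -, hBC⟩ D ⟨-, -, hDC⟩ hcover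
    rcases (hcover ▸ hCE hy : y ∈ A ∪ B ∪ D) with (hyA | hyB) | hyD
    exacts [disjoint_left.1 hAC hyA hy, disjoint_left.1 hBC hyB hy, disjoint_left.1 hDC hyD hy]
  · rintro A ⟨hAE, -, hAC⟩ hcard
    have hle : A.ncard ≤ (K.E \ C).ncard :=
      ncard_le_ncard (subset_sdiff.2 ⟨hAE, hAC⟩) hfin.sdiff
    rw [ncard_sdiff hCE (hfin.subset hCE)] at hle
    have := ncard_le_ncard hCE hfin
    omega

end Tangle

section Matroid

variable {M : Matroid α} {X Y A C : Set α} {x : α}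

lemma mrank_eq_eRk [M.RankFinite] (X : Set α) : (mrank M X : ℕ∞) = M.eRk X := by
  obtain ⟨J, hJ, hJfin⟩ := (M.isRkFinite_set X).exists_finite_isBasis'
  have hmax : IsGreatest {n | ∃ I, M.Indep I ∧ I ⊆ X ∧ I.ncard = n} J.ncard := by
    refine ⟨⟨J, hJ.indep, hJ.subset, rfl⟩, ?_⟩
    rintro _ ⟨I, hI, hIX, rfl⟩
    have h := hI.encard_le_eRk_of_subset hIX
    rw [← hJ.encard_eq_eRk, ← hI.finite.cast_ncard_eq, ← hJfin.cast_ncard_eq] at h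
    exact_mod_cast h
  rw [mrank, hmax.csSup_eq, hJfin.cast_ncard_eq, hJ.encard_eq_eRk]

lemma mrank_empty [M.RankFinite] : mrank M ∅ = 0 := by
  exact_mod_cast (mrank_eq_eRk ∅).trans M.eRk_empty

lemma mrank_inter_add_mrank_union_le [M.RankFinite] (X Y : Set α) :
    mrank M (X ∩ Y) + mrank M (X ∪ Y) ≤ mrank M X + mrank M Y := by
  have h := M.eRk_inter_add_eRk_union_le X Y
  simp only [← mrank_eq_eRk] at h
  exact_mod_cast h

lemma mrank_ground_le_add_sdiff [M.RankFinite] (hX : X ⊆ M.E) :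
    mrank M M.E ≤ mrank M X + mrank M (M.E \ X) := by
  have h := mrank_inter_add_mrank_union_le (M := M) X (M.E \ X)
  rw [union_sdiff_cancel hX] at h
  omega

lemma one_le_lamM (M : Matroid α) (X : Set α) : 1 ≤ lamM M X :=
  Nat.le_add_left 1 _

lemma lamM_sdiff (hX : X ⊆ M.E) : lamM M (M.E \ X) = lamM M X := by
  rw [lamM, lamM, sdiff_sdiff_cancel_left hX, add_comm (mrank M X)]

lemma lamM_inter_add_lamM_union_le [M.RankFinite] (hX : X ⊆ M.E) (hY : Y ⊆ M.E) :
    lamM M (X ∩ Y) + lamM M (X ∪ Y) ≤ lamM M X + lamM M Y := by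
  have hsub := mrank_inter_add_mrank_union_le (M := M) X Y
  have hsub' := mrank_inter_add_mrank_union_le (M := M) (M.E \ X) (M.E \ Y)
  rw [sdiff_inter_sdiff, ← sdiff_inter] at hsub'
  have := mrank_ground_le_add_sdiff hX
  have := mrank_ground_le_add_sdiff hY
  have := mrank_ground_le_add_sdiff (inter_subset_left.trans hX : X ∩ Y ⊆ M.E)
  have := mrank_ground_le_add_sdiff (union_subset hX hY)
  unfold lamM
  omega

lemma isSeparator_iff_lamM_lt_two (hX : X ⊆ M.E) : IsSeparator M X ↔ lamM M X < 2 := by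
  have := one_le_lamM M X
  exact ⟨fun h => h.2 ▸ one_lt_two, fun h => ⟨hX, by omega⟩⟩

lemma IsSeparator.lamM_lt_two (h : IsSeparator M X) : lamM M X < 2 :=
  h.2 ▸ one_lt_two

lemma isSeparator_empty [M.RankFinite] : IsSeparator M ∅ :=
  ⟨empty_subset _, by simp [lamM, mrank_empty]⟩

lemma IsSeparator.sdiff (h : IsSeparator M X) : IsSeparator M (M.E \ X) :=
  ⟨sdiff_subset, (lamM_sdiff h.1).trans h.2⟩

lemma isSeparator_ground [M.RankFinite] : IsSeparator M M.E := by
  simpa using (isSeparator_empty (M := M)).sdiff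

lemma IsSeparator.inter [M.RankFinite] (hX : IsSeparator M X) (hY : IsSeparator M Y) :
    IsSeparator M (X ∩ Y) := by
  have h := lamM_inter_add_lamM_union_le hX.1 hY.1
  rw [hX.2, hY.2] at h
  have := one_le_lamM M (X ∩ Y)
  have := one_le_lamM M (X ∪ Y)
  exact ⟨inter_subset_left.trans hX.1, by omega⟩

lemma IsSeparator.union [M.RankFinite] (hX : IsSeparator M X) (hY : IsSeparator M Y) :
    IsSeparator M (X ∪ Y) := by
  have h := lamM_inter_add_lamM_union_le hX.1 hY.1
  rw [hX.2, hY.2] at h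
  have := one_le_lamM M (X ∩ Y)
  have := one_le_lamM M (X ∪ Y)
  exact ⟨union_subset hX.1 hY.1, by omega⟩

lemma IsSeparator.isLoop_or_isColoop [M.RankFinite] (h : IsSeparator M {x}) :
    M.IsLoop x ∨ M.IsColoop x := by
  refine or_iff_not_imp_left.2 fun hloop => Matroid.isColoop_iff_sdiff_not_spanning.2 fun hsp => ?_
  have hx : mrank M {x} = 1 := by
    exact_mod_cast (mrank_eq_eRk {x}).trans ((Matroid.not_isLoop_iff (h.1 rfl)).1 hloop).eRk_eq
  have hsdiff : mrank M (M.E \ {x}) = mrank M M.E := by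
    have := (mrank_eq_eRk _).trans (hsp.eRk_eq.trans ((mrank_eq_eRk M.E).trans M.eRk_ground).symm)
    exact_mod_cast this
  have := h.2
  unfold lamM at this
  omega

lemma IsComponent.subset_or_disjoint [M.RankFinite] (hC : IsComponent M C)
    (hA : IsSeparator M A) : C ⊆ A ∨ Disjoint A C := by
  rcases (C ∩ A).eq_empty_or_nonempty with h | h
  · exact .inr (disjoint_iff_inter_eq_empty.2 (by rwa [inter_comm]))
  · exact .inl (inter_eq_left.1 (hC.2.2 _ inter_subset_left h (hC.1.inter hA)))

lemma exists_isComponent_mem [M.Finite] (hx : x ∈ M.E) : ∃ C, IsComponent M C ∧ x ∈ C := by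
  have hfin : {C | IsSeparator M C ∧ x ∈ C}.Finite :=
    M.ground_finite.finite_subsets.subset fun C hC => hC.1.1
  obtain ⟨C, ⟨hC, hxC⟩, hmin⟩ := hfin.exists_minimal ⟨M.E, isSeparator_ground, hx⟩
  refine ⟨C, ⟨hC, ⟨x, hxC⟩, fun C' hC'C hC'ne hC' => ?_⟩, hxC⟩
  by_cases hxC' : x ∈ C'
  · exact hC'C.antisymm (hmin ⟨hC', hxC'⟩ hC'C)
  · obtain ⟨y, hy⟩ := hC'ne
    have hCD := hmin ⟨hC.inter hC'.sdiff, hxC, hC.1 hxC, hxC'⟩ inter_subset_left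
    exact ((hCD (hC'C hy)).2.2 hy).elim

lemma isSeparator_singleton_or_exists_isComponent [M.Finite] (hx : x ∈ M.E) :
    IsSeparator M {x} ∨ ∃ C, IsComponent M C ∧ 2 ≤ C.ncard ∧ x ∈ C := by
  obtain ⟨C, hC, hxC⟩ := exists_isComponent_mem hx
  refine (lt_or_ge C.ncard 2).imp (fun h => ?_) fun h => ⟨C, hC, h, hxC⟩
  have hCfin : C.Finite := M.ground_finite.subset hC.1.1
  have hCx : C = {x} := eq_singleton_iff_unique_mem.2
    ⟨hxC, fun y hy => (ncard_le_one hCfin).1 (by omega) y hy x hxC⟩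
  exact hCx ▸ hC.1

lemma isTangle_avoiding_of_isComponent [M.Finite] (hC : IsComponent M C) (h2 : 2 ≤ C.ncard) :
    IsTangle (KM M) 2 ((KM M).avoiding 2 C) :=
  isTangle_avoiding M.ground_finite (fun _ hA => lamM_sdiff hA) hC.1.1 h2 fun _ hA hlam =>
    hC.subset_or_disjoint ((isSeparator_iff_lamM_lt_two hA).2 hlam)

variable {T : Set (Set α)}

lemma IsTangle.isSeparator_of_mem (hT : IsTangle (KM M) 2 T) (hA : A ∈ T) : IsSeparator M A :=
  (isSeparator_iff_lamM_lt_two (hT.1 A hA).1).2 (hT.1 A hA).2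

lemma IsTangle.mem_of_forall_isSeparator_singleton [M.Finite] (hT : IsTangle (KM M) 2 T)
    (hA : A ⊆ M.E) (h : ∀ x ∈ A, IsSeparator M {x}) : A ∈ T := by
  refine Set.Finite.induction_on_subset (motive := fun s _ => s ∈ T) A
    (M.ground_finite.subset hA) (hT.empty_mem isSeparator_empty.lamM_lt_two) ?_
  intro x s hxA _ _ hs
  rw [insert_eq]
  exact hT.union_mem (hT.singleton_mem (hA hxA) (h x hxA).lamM_lt_two) hs
    ((h x hxA).union (hT.isSeparator_of_mem hs)).lamM_lt_two

end Matroid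

/-- If `M` is a `2`-entangled matroid with a tangle `T` of order `2`
in `K(M)`, then every set in `T` consists of loops and coloops of `M`, and `M` has
exactly one connected component with two or more elements. -/
theorem stmt15 {α : Type*} (M : Matroid α) [M.Finite]
    (hent : Entangled (KM M) 2) (T : Set (Set α)) (hT : IsTangle (KM M) 2 T) :
    (∀ X ∈ T, ∀ x ∈ X, (¬ M.Indep {x}) ∨ (∀ B, M.IsBase B → x ∈ B)) ∧
    (∃! C : Set α, IsComponent M C ∧ 2 ≤ C.ncard) := by
  have hT_eq : ∀ C, IsComponent M C → 2 ≤ C.ncard → T = (KM M).avoiding 2 C :=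
    fun C hC h2 => hent 2 le_rfl T _ hT (isTangle_avoiding_of_isComponent hC h2)
  refine ⟨fun X hX x hxX => ?_, ?_⟩
  · rcases isSeparator_singleton_or_exists_isComponent ((hT.1 X hX).1 hxX)
      with hx | ⟨C, hC, h2, hxC⟩
    · exact hx.isLoop_or_isColoop.imp (fun h => h.dep.not_indep) fun h _ hB => h.mem_of_isBase hB
    · rw [hT_eq C hC h2] at hX
      exact (disjoint_left.1 hX.2.2 hxX hxC).elim
  · obtain ⟨x, hxE, hx⟩ : ∃ x ∈ M.E, ¬ IsSeparator M {x} := by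
      by_contra! h
      exact hT.ground_not_mem (hT.mem_of_forall_isSeparator_singleton subset_rfl h)
    obtain ⟨C, hC, h2, -⟩ := (isSeparator_singleton_or_exists_isComponent hxE).resolve_left hx
    refine ⟨C, ⟨hC, h2⟩, fun C' ⟨hC', h2'⟩ => ?_⟩
    rcases hC.subset_or_disjoint hC'.1 with hCC' | hdisj
    · exact (hC'.2.2 C hCC' hC.2.1 hC.1).symm
    · have hmem : C' ∈ (KM M).avoiding 2 C := ⟨hC'.1.1, hC'.1.lamM_lt_two, hdisj⟩
      rw [← hT_eq C hC h2, hT_eq C' hC' h2'] at hmem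
      exact (hC'.2.1.ne_empty (disjoint_self.1 hmem.2.2)).elim
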